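/- Let Λ ∈ ℝ and let P(ζ) = 1 + (Λ/2)ζζ̄. Let g(ζ) = a₀ + a₁ζ + a₂ζ² with a₀,a₁,a₂ ∈ ℂ, and set W = P^{−2}·conj(g)(ζ̄). Then P³·(∂_ζ̄ W − ∂_ζ conj(W)) = (1 − (Λ/2)ζζ̄)(ā₁ − a₁) + ζ̄(2ā₂ + Λa₀) − ζ(2a₂ + Λā₀), wherever P ≠ 0. -/

import Mathlib

/-- Wirtinger derivative `∂_ζ = (∂_x − i∂_y)/2`. -/
noncomputable def wD (f : ℂ → ℂ) (z : ℂ) : ℂ :=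
  (fderiv ℝ f z 1 - Complex.I * fderiv ℝ f z Complex.I) / 2

/-- Wirtinger derivative `∂_ζ̄ = (∂_x + i∂_y)/2`. -/
noncomputable def wDbar (f : ℂ → ℂ) (z : ℂ) : ℂ :=
  (fderiv ℝ f z 1 + Complex.I * fderiv ℝ f z Complex.I) / 2

/-!
Since `∂_ζ W̄ = conj (∂_ζ̄ W)` and `P` is real, the left-hand side is `X − X̄` with
`X = P³ ∂_ζ̄ W`. Writing `W = P⁻² · conj (g ζ)` with `g` holomorphic, the Leibniz rule gives
`X = P · conj (g' ζ) − 2 (∂_ζ̄ P) · conj (g ζ)` with `∂_ζ̄ P = (Λ/2) ζ`, and the identity is then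
polynomial algebra in `ζ, ζ̄` and the coefficients.
-/

open Complex ComplexConjugate

section Wirtinger

variable {f g : ℂ → ℂ} {z : ℂ}

theorem fderiv_conj_comp (f : ℂ → ℂ) (z v : ℂ) :
    fderiv ℝ (fun w => conj (f w)) z v = conj (fderiv ℝ f z v) := by
  have h := conjLIE.comp_fderiv (f := f) (x := z)
  simp only [Function.comp_def, conjLIE_apply] at h
  simp [h]

theorem wD_conj_comp (f : ℂ → ℂ) (z : ℂ) : wD (fun w => conj (f w)) z = conj (wDbar f z) := by
  simp only [wD, wDbar, fderiv_conj_comp, map_div₀, map_add, map_mul, conj_I, map_ofNat]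
  ring

theorem wDbar_conj_comp (f : ℂ → ℂ) (z : ℂ) : wDbar (fun w => conj (f w)) z = conj (wD f z) := by
  simp only [wD, wDbar, fderiv_conj_comp, map_div₀, map_sub, map_mul, conj_I, map_ofNat]
  ring

theorem wDbar_const_add (a : ℂ) (f : ℂ → ℂ) (z : ℂ) :
    wDbar (fun w => a + f w) z = wDbar f z := by
  simp only [wDbar, fderiv_const_add]

theorem wDbar_mul (hf : DifferentiableAt ℝ f z) (hg : DifferentiableAt ℝ g z) :
    wDbar (fun w => f w * g w) z = f z * wDbar g z + wDbar f z * g z := by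
  simp only [wDbar, fderiv_fun_mul hf hg, add_apply, FunLike.coe_smul, Pi.smul_apply, smul_eq_mul]
  ring

theorem wDbar_pow (hf : DifferentiableAt ℝ f z) (n : ℕ) :
    wDbar (fun w => f w ^ n) z = n * f z ^ (n - 1) * wDbar f z := by
  simp only [wDbar, fderiv_fun_pow n hf, FunLike.coe_smul, Pi.smul_apply, nsmul_eq_mul, smul_eq_mul]
  ring

theorem wDbar_inv (hf : DifferentiableAt ℝ f z) (hz : f z ≠ 0) :
    wDbar (fun w => (f w)⁻¹) z = -wDbar f z / f z ^ 2 := by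
  have h := (hasFDerivAt_inv' (𝕜 := ℝ) hz).comp z hf.hasFDerivAt
  simp only [wDbar, Function.comp_def] at h ⊢
  rw [h.fderiv]
  simp only [ContinuousLinearMap.comp_apply, FunLike.coe_neg, Pi.neg_apply,
    ContinuousLinearMap.mulLeftRight_apply]
  field_simp
  ring

theorem DifferentiableAt.fderiv_real_apply (hf : DifferentiableAt ℂ f z) (v : ℂ) :
    fderiv ℝ f z v = v * deriv f z := by
  rw [hf.fderiv_restrictScalars ℝ, ContinuousLinearMap.coe_restrictScalars', fderiv_eq_smul_deriv,
    smul_eq_mul]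

theorem DifferentiableAt.wDbar_eq_zero (hf : DifferentiableAt ℂ f z) : wDbar f z = 0 := by
  rw [wDbar, hf.fderiv_real_apply, hf.fderiv_real_apply, ← mul_assoc, I_mul_I]
  ring

theorem DifferentiableAt.wD_eq_deriv (hf : DifferentiableAt ℂ f z) : wD f z = deriv f z := by
  rw [wD, hf.fderiv_real_apply, hf.fderiv_real_apply, ← mul_assoc, I_mul_I]
  ring

theorem wDbar_conj (z : ℂ) : wDbar (fun w => conj w) z = 1 := by
  simpa [differentiableAt_id.wD_eq_deriv] using wDbar_conj_comp id z

theorem wDbar_one_add_mul_mul_conj (c z : ℂ) : wDbar (fun w => 1 + c * w * conj w) z = c * z := by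
  have hcw : DifferentiableAt ℂ (fun w => c * w) z := by fun_prop
  rw [wDbar_const_add, wDbar_mul (hcw.restrictScalars ℝ) (by fun_prop), wDbar_conj,
    hcw.wDbar_eq_zero]
  ring

theorem pow_three_mul_wDbar_inv_sq_mul_conj {P : ℂ → ℂ} (hP : DifferentiableAt ℝ P z)
    (hPz : P z ≠ 0) (hg : DifferentiableAt ℂ g z) :
    P z ^ 3 * wDbar (fun w => (P w ^ 2)⁻¹ * conj (g w)) z
      = P z * conj (deriv g z) - 2 * wDbar P z * conj (g z) := by
  have hP2 : DifferentiableAt ℝ (fun w => P w ^ 2) z := hP.pow 2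
  have hgbar : DifferentiableAt ℝ (fun w => conj (g w)) z := by
    have := hg.restrictScalars ℝ
    fun_prop
  rw [wDbar_mul (hP2.fun_inv (pow_ne_zero 2 hPz)) hgbar, wDbar_inv hP2 (pow_ne_zero 2 hPz),
    wDbar_pow hP, wDbar_conj_comp, hg.wD_eq_deriv]
  field_simp
  ring

end Wirtinger

/-- The twist-like quantity of the Kundt metric function `W = P⁻² ḡ(ζ̄)`
for `g` quadratic in `ζ` (the subclass with `DΨ₄ = 0`):
`P³ (∂_ζ̄ W − ∂_ζ W̄) = (1 − (Λ/2)ζζ̄)(ā₁ − a₁) + ζ̄(2ā₂ + Λa₀) − ζ(2a₂ + Λā₀)`. -/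
theorem W_twist_identity (Λ : ℝ) (a₀ a₁ a₂ : ℂ)
    (P : ℂ → ℂ) (hP : ∀ z, P z = 1 + (Λ / 2 : ℂ) * z * (starRingEnd ℂ) z)
    (W : ℂ → ℂ)
    (hW : ∀ z, W z = ((P z) ^ 2)⁻¹ *
      ((starRingEnd ℂ) a₀ + (starRingEnd ℂ) a₁ * (starRingEnd ℂ) z
        + (starRingEnd ℂ) a₂ * ((starRingEnd ℂ) z) ^ 2))
    (z : ℂ) (hz : P z ≠ 0) :
    (P z) ^ 3 * (wDbar W z - wD (fun w => (starRingEnd ℂ) (W w)) z)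
      = (1 - (Λ / 2 : ℂ) * z * (starRingEnd ℂ) z) * ((starRingEnd ℂ) a₁ - a₁)
        + (starRingEnd ℂ) z * (2 * (starRingEnd ℂ) a₂ + (Λ : ℂ) * a₀)
        - z * (2 * a₂ + (Λ : ℂ) * (starRingEnd ℂ) a₀) := by
  set g : ℂ → ℂ := fun w => a₀ + a₁ * w + a₂ * w ^ 2
  have hP_eq : P = fun w => 1 + (Λ / 2 : ℂ) * w * conj w := funext hP
  have hW_eq : W = fun w => (P w ^ 2)⁻¹ * conj (g w) := by
    funext w
    simp [hW, g]
  have hg : HasDerivAt g (a₁ + 2 * a₂ * z) z :=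
    ((((hasDerivAt_id' z).const_mul a₁).const_add a₀).fun_add
      ((hasDerivAt_pow 2 z).const_mul a₂)).congr_deriv (by push_cast; ring)
  have hPdiff : DifferentiableAt ℝ P z := by
    rw [hP_eq]
    fun_prop
  have hPbar : wDbar P z = (Λ / 2 : ℂ) * z := by
    rw [hP_eq, wDbar_one_add_mul_mul_conj]
  have hX := pow_three_mul_wDbar_inv_sq_mul_conj hPdiff hz hg.differentiableAt
  rw [hg.deriv, hPbar, ← hW_eq] at hX
  have hP_real : conj (P z) = P z := by
    rw [hP]
    simp only [map_add, map_one, map_mul, map_div₀, conj_ofReal, map_ofNat, conj_conj]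
    ring
  have hconj : P z ^ 3 * conj (wDbar W z) = conj (P z ^ 3 * wDbar W z) := by
    rw [map_mul, map_pow, hP_real]
  rw [wD_conj_comp, mul_sub, hconj, hX]
  simp only [g, hP, map_sub, map_add, map_mul, map_pow, map_div₀, conj_conj, conj_ofReal, map_ofNat,
    map_one]
  ring
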